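/- Let R = ℂ[A₁,A₂,B₁,p₁,p₂,p₃]/(B₁(A₁−A₂) − p₂p₃) with the ℂ* × {±1}-action given by (c,s)·(A₁,A₂,B₁,p₁,p₂,p₃) = (A₁, A₂, csB₁, c⁻¹p₁, sp₂, cp₃). The ℂ-algebra homomorphism from ℂ[x₁,x₂,x₃,x₄,x₅,x₆] to the subring of (ℂ* × {±1})-invariants of R sending x₁ ↦ A₁, x₂ ↦ A₂, x₃ ↦ p₂², x₄ ↦ p₁p₃, x₅ ↦ p₂B₁p₁, x₆ ↦ B₁²p₁² is surjective, and its kernel is the ideal generated by the three quadrics x₅(x₁−x₂) − x₄x₃, x₆(x₁−x₂) − x₄x₅, and x₅² − x₃x₆. In particular the invariant ring is isomorphic to ℂ[x₁,…,x₆]/(x₅(x₁−x₂) − x₄x₃, x₆(x₁−x₂) − x₄x₅, x₅² − x₃x₆). -/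

import Mathlib

open MvPolynomial

noncomputable section

/-- The polynomial ring `ℂ[A₁,A₂,B₁,p₁,p₂,p₃]`, with variables `X 0, …, X 5`
corresponding to `A₁, A₂, B₁, p₁, p₂, p₃`. -/
abbrev P6 := MvPolynomial (Fin 6) ℂ

/-- The defining relation `B₁(A₁ - A₂) - p₂p₃` of the hypersurface `X ⊂ 𝔸⁶`. -/
def relC2 : P6 := X 2 * (X 0 - X 1) - X 4 * X 5

/-- The ideal generated by the defining relation; `R = P6 ⧸ IC2`. -/
def IC2 : Ideal P6 := Ideal.span {relC2}

/-- The action of `(c,s) ∈ ℂ* × {±1}` on the coordinate ring, induced by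
`(c,s)·(A₁,A₂,B₁,p₁,p₂,p₃) = (A₁, A₂, csB₁, c⁻¹p₁, sp₂, cp₃)`. -/
def actC2 (c s : ℂ) : P6 →ₐ[ℂ] P6 :=
  aeval ![X 0, X 1, C (c * s) * X 2, C c⁻¹ * X 3, C s * X 4, C c * X 5]

/-- The homomorphism `ℂ[x₁,…,x₆] → R` sending
`x₁ ↦ A₁`, `x₂ ↦ A₂`, `x₃ ↦ p₂²`, `x₄ ↦ p₁p₃`, `x₅ ↦ p₂B₁p₁`, `x₆ ↦ B₁²p₁²`
(here `x₁,…,x₆` are the variables `X 0, …, X 5` of the source). -/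
def psiC2 : MvPolynomial (Fin 6) ℂ →ₐ[ℂ] P6 ⧸ IC2 :=
  aeval ![Ideal.Quotient.mk IC2 (X 0), Ideal.Quotient.mk IC2 (X 1),
    Ideal.Quotient.mk IC2 (X 4 ^ 2), Ideal.Quotient.mk IC2 (X 3 * X 5),
    Ideal.Quotient.mk IC2 (X 4 * X 2 * X 3), Ideal.Quotient.mk IC2 (X 2 ^ 2 * X 3 ^ 2)]

/-!
The group acts diagonally: `(c, s)` scales the monomial `X^e` by
`c ^ (e 2 + e 5 - e 3) * s ^ (e 2 + e 4)`. Since `relC2` is semi-invariant, `IC2` is homogeneous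
for the corresponding `ℤ`- and `ZMod 2`-gradings, so invariance under `c = 2` and under `s = -1`
pushes every component of nonzero degree of a lift into `IC2`. The component of degree `(0, 0)` is
a combination of monomials with `e 2 + e 5 = e 3` and `e 2 + e 4` even, and each of these is a
product of the six generators.

For the kernel, shift `X 0 ↦ X 0 + X 1` and compose with the parametrization
`(A₁, A₂, B₁, p₁, p₂, p₃) = (t₀t₁ + t₄, t₄, t₂t₃, t₅, t₀t₂, t₁t₃)` of the hypersurface: the map
becomes a monomial map and the quadrics become the binomials `X 4 X 0 - X 3 X 2`,
`X 5 X 0 - X 3 X 4`, `X 4 ^ 2 - X 2 X 5`. Rewriting with these lowers `3 e 0 + 2 e 4 + 3 e 5`, so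
every polynomial is a normal form modulo the quadrics, and the monomial map is injective on normal
monomials.
-/

theorem Finsupp.single_add_single_le {σ : Type*} {e : σ →₀ ℕ} {i j : σ} (hij : i ≠ j)
    (hi : 1 ≤ e i) (hj : 1 ≤ e j) : single i 1 + single j 1 ≤ e := by
  classical
  intro k
  simp only [coe_add, Pi.add_apply, single_apply]
  split_ifs with hik hjk hjk
  · exact absurd (hik.trans hjk.symm) hij
  · exact hik ▸ hi
  · exact hjk ▸ hj
  · exact Nat.zero_le _

namespace MvPolynomial

section WeightedComponents

variable {σ R M : Type*} [CommRing R] [AddCommMonoid M] [DecidableEq M] {w : σ → M}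

attribute [local instance] weightedGradedAlgebra

theorem sub_weightedHomogeneousComponent_zero_mem {I : Ideal (MvPolynomial σ R)}
    (hI : I.IsHomogeneous (weightedHomogeneousSubmodule R w)) {f : MvPolynomial σ R}
    (hf : ∀ m ≠ 0, weightedHomogeneousComponent w m f ∈ I) :
    f - weightedHomogeneousComponent w 0 f ∈ I := by
  refine (mem_iff_weightedHomogeneousComponent_mem R w hI _).mpr fun m => ?_
  have h0 := weightedHomogeneousComponent_isWeightedHomogeneous (R := R) (w := w) 0 f
  rw [map_sub]
  by_cases hm : m = 0
  · rw [hm, h0.weightedHomogeneousComponent_same, sub_self]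
    exact I.zero_mem
  · rw [h0.weightedHomogeneousComponent_ne m hm, sub_zero]
    exact hf m hm

theorem weightedHomogeneousComponent_map_eq_smul (φ : MvPolynomial σ R →ₗ[R] MvPolynomial σ R)
    (χ : M → R) (hφ : ∀ e, φ (monomial e 1) = χ (Finsupp.weight w e) • monomial e 1)
    (m : M) (f : MvPolynomial σ R) :
    weightedHomogeneousComponent w m (φ f) = χ m • weightedHomogeneousComponent w m f := by
  induction f using induction_on' with
  | add p q hp hq => rw [map_add, map_add, hp, hq, map_add, smul_add]
  | monomial e a =>
    have hmon := weightedHomogeneousComponent_of_mem (m := m)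
      (isWeightedHomogeneous_monomial w e (1 : R) rfl)
    rw [← mul_one a, ← smul_eq_mul, ← smul_monomial, map_smul, hφ, map_smul, map_smul, map_smul,
      hmon]
    split_ifs with h
    · rw [h, smul_comm]
    · simp

theorem weightedHomogeneousComponent_mem_of_map_sub_mem {K : Type*} [Field K]
    {I : Ideal (MvPolynomial σ K)} (hI : I.IsHomogeneous (weightedHomogeneousSubmodule K w))
    (φ : MvPolynomial σ K →ₗ[K] MvPolynomial σ K) (χ : M → K)
    (hφ : ∀ e, φ (monomial e 1) = χ (Finsupp.weight w e) • monomial e 1)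
    {f : MvPolynomial σ K} (hf : φ f - f ∈ I) {m : M} (hm : χ m ≠ 1) :
    weightedHomogeneousComponent w m f ∈ I := by
  have h := weightedHomogeneousComponent_mem_of_mem K w hI hf m
  rw [map_sub, weightedHomogeneousComponent_map_eq_smul φ χ hφ, ← one_smul K
    (weightedHomogeneousComponent w m f), smul_smul, mul_one, ← sub_smul] at h
  exact (Submodule.smul_mem_iff (I.restrictScalars K) (sub_ne_zero.mpr hm)).mp h

end WeightedComponents

section MonomialMaps

variable {σ τ R : Type*} [CommRing R]

theorem restrictSupport_sup_eq_top {s : Set (σ →₀ ℕ)} {I : Ideal (MvPolynomial σ R)}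
    (μ : σ → ℕ) (hred : ∀ e ∉ s, ∃ u v, u ≤ e ∧ monomial u (1 : R) - monomial v 1 ∈ I ∧
      Finsupp.weight μ v < Finsupp.weight μ u) :
    restrictSupport R s ⊔ I.restrictScalars R = ⊤ := by
  set S := restrictSupport R s ⊔ I.restrictScalars R
  have hmonomial : ∀ e, monomial e (1 : R) ∈ S := by
    intro e
    induction hn : Finsupp.weight μ e using Nat.strong_induction_on generalizing e with
    | _ n ih =>
      by_cases hs : e ∈ s
      · exact Submodule.mem_sup_left ((monomial_mem_restrictSupport (R := R)).mpr (Or.inl hs))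
      obtain ⟨u, v, hue, huv, hμ⟩ := hred e hs
      obtain ⟨a, rfl⟩ : ∃ a, e = a + u := ⟨e - u, (tsub_add_cancel_of_le hue).symm⟩
      have hsplit : monomial (a + u) (1 : R) =
          monomial a 1 * (monomial u 1 - monomial v 1) + monomial (a + v) 1 := by
        rw [mul_sub, monomial_mul, monomial_mul, one_mul, sub_add_cancel]
      rw [hsplit]
      refine S.add_mem (Submodule.mem_sup_right (I.mul_mem_left _ huv)) (ih _ ?_ _ rfl)
      rw [← hn, map_add, map_add]
      omega
  refine Submodule.eq_top_iff'.mpr fun f => ?_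
  induction f using induction_on' with
  | monomial e a => simpa [smul_monomial] using S.smul_mem a (hmonomial e)
  | add p q hp hq => exact S.add_mem hp hq

theorem aeval_monomial_monomial (D : σ → τ →₀ ℕ) (e : σ →₀ ℕ) (a : R) :
    aeval (fun i => monomial (D i) (1 : R)) (monomial e a) =
      monomial (e.sum fun i k => k • D i) a := by
  rw [aeval_monomial, Finsupp.prod, Finsupp.sum]
  simp only [monomial_pow, one_pow]
  rw [← monomial_sum_one, algebraMap_eq, C_mul_monomial, mul_one]

theorem injOn_aeval_monomial (D : σ → τ →₀ ℕ) {s : Set (σ →₀ ℕ)}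
    (hD : Set.InjOn (fun e : σ →₀ ℕ => e.sum fun i k => k • D i) s) :
    Set.InjOn (aeval (fun i => monomial (D i) (1 : R)))
      (restrictSupport R s : Set (MvPolynomial σ R)) := by
  have hmap : ∀ p : MvPolynomial σ R, aeval (fun i => monomial (D i) (1 : R)) p =
      AddMonoidAlgebra.mapDomain (fun e : σ →₀ ℕ => e.sum fun i k => k • D i) p := by
    intro p
    induction p using induction_on' with
    | monomial e a => rw [aeval_monomial_monomial, ← single_eq_monomial, ← single_eq_monomial,
        AddMonoidAlgebra.mapDomain_single]
    | add p q hp hq => rw [map_add, hp, hq, AddMonoidAlgebra.mapDomain_add]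
  intro p hp q hq h
  rw [hmap, hmap] at h
  exact AddMonoidAlgebra.coeff_injective
    (Finsupp.mapDomain_injOn s hD hp hq (congrArg AddMonoidAlgebra.coeff h))

end MonomialMaps

end MvPolynomial

def psiC2Lift : P6 →ₐ[ℂ] P6 :=
  aeval ![X 0, X 1, X 4 ^ 2, X 3 * X 5, X 4 * X 2 * X 3, X 2 ^ 2 * X 3 ^ 2]

theorem psiC2_eq : psiC2 = (Ideal.Quotient.mkₐ ℂ IC2).comp psiC2Lift :=
  algHom_ext fun i => by fin_cases i <;> simp [psiC2, psiC2Lift]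

theorem actC2_monomial (c s : ℂ) (e : Fin 6 →₀ ℕ) :
    actC2 c s (monomial e 1) = (c ^ (e 2 + e 5) * c⁻¹ ^ e 3 * s ^ (e 2 + e 4)) • monomial e 1 := by
  simp only [actC2, monomial_eq, smul_eq_C_mul, Finsupp.prod_fintype _ _ (fun i => pow_zero _),
    Fin.prod_univ_six, map_mul, map_pow, aeval_X, C_1, one_mul, Matrix.cons_val]
  ring

theorem actC2_monomial_eq_self {c s : ℂ} (hc : c ≠ 0) (hs : s = 1 ∨ s = -1) {e : Fin 6 →₀ ℕ}
    (hC : e 2 + e 5 = e 3) (hS : Even (e 2 + e 4)) : actC2 c s (monomial e 1) = monomial e 1 := by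
  rw [actC2_monomial, hC, ← mul_pow, mul_inv_cancel₀ hc, one_pow, one_mul]
  rcases hs with rfl | rfl
  · simp
  · simp [hS.neg_one_pow]

theorem psiC2Lift_X (i : Fin 6) :
    ∃ e : Fin 6 →₀ ℕ, psiC2Lift (X i) = monomial e 1 ∧ e 2 + e 5 = e 3 ∧ Even (e 2 + e 4) := by
  fin_cases i <;>
    simp only [psiC2Lift, aeval_X, Matrix.cons_val, Fin.reduceFinMk, Fin.zero_eta, Fin.mk_one] <;>
    simp only [X, monomial_mul, monomial_pow, one_pow, mul_one] <;>
    exact ⟨_, rfl, by simp, by simp⟩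

theorem actC2_comp_psiC2Lift {c s : ℂ} (hc : c ≠ 0) (hs : s = 1 ∨ s = -1) :
    (actC2 c s).comp psiC2Lift = psiC2Lift := by
  refine algHom_ext fun i => ?_
  obtain ⟨e, he, hC, hS⟩ := psiC2Lift_X i
  rw [AlgHom.comp_apply, he, actC2_monomial_eq_self hc hs hC hS]

theorem actC2_mem_IC2 (c s : ℂ) {f : P6} (hf : f ∈ IC2) : actC2 c s f ∈ IC2 := by
  obtain ⟨g, rfl⟩ := Ideal.mem_span_singleton.mp hf
  have hrel : actC2 c s relC2 = C (c * s) * relC2 := by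
    simp only [actC2, relC2, map_sub, map_mul, aeval_X, Matrix.cons_val]
    ring
  rw [map_mul, hrel, mul_assoc]
  exact Ideal.mul_mem_left _ _ (Ideal.mul_mem_right _ _ (Ideal.mem_span_singleton_self _))

theorem mk_actC2_eq_psiC2 {c s : ℂ} (hc : c ≠ 0) (hs : s = 1 ∨ s = -1) {f p : P6}
    (hf : Ideal.Quotient.mk IC2 f = psiC2 p) :
    Ideal.Quotient.mk IC2 (actC2 c s f) = psiC2 p := by
  rw [psiC2_eq, AlgHom.comp_apply, Ideal.Quotient.mkₐ_eq_mk] at hf ⊢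
  have h := actC2_mem_IC2 c s (Ideal.Quotient.eq.mp hf)
  rw [map_sub, ← AlgHom.comp_apply, actC2_comp_psiC2Lift hc hs] at h
  exact Ideal.Quotient.eq.mpr h

def torusWeight : Fin 6 → ℤ := ![0, 0, 1, -1, 0, 1]

def signWeight : Fin 6 → ZMod 2 := ![0, 0, 1, 0, 1, 0]

theorem weight_torusWeight (e : Fin 6 →₀ ℕ) :
    Finsupp.weight torusWeight e = ((e 2 + e 5 : ℕ) : ℤ) - (e 3 : ℕ) := by
  simp only [Finsupp.weight_eq_sum, Fin.sum_univ_six, torusWeight, Matrix.cons_val, nsmul_eq_mul]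
  push_cast
  ring

theorem weight_signWeight (e : Fin 6 →₀ ℕ) :
    Finsupp.weight signWeight e = ((e 2 + e 4 : ℕ) : ZMod 2) := by
  simp [Finsupp.weight_eq_sum, Fin.sum_univ_six, signWeight]

theorem relC2_isWeightedHomogeneous {M : Type*} [AddCommMonoid M] {w : Fin 6 → M}
    (h01 : w 0 = w 1) (h : w 2 + w 0 = w 4 + w 5) :
    IsWeightedHomogeneous w relC2 (w 2 + w 0) := by
  have hX := isWeightedHomogeneous_X ℂ w
  refine (hX 2).mul ((hX 0).sub ?_) |>.sub (h ▸ (hX 4).mul (hX 5))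
  exact h01 ▸ hX 1

attribute [local instance] weightedGradedAlgebra in
theorem IC2_isHomogeneous {M : Type*} [AddCommMonoid M] [DecidableEq M] {w : Fin 6 → M}
    (h01 : w 0 = w 1) (h : w 2 + w 0 = w 4 + w 5) :
    IC2.IsHomogeneous (weightedHomogeneousSubmodule ℂ w) := by
  refine Ideal.homogeneous_span _ _ fun x hx => ⟨w 2 + w 0, ?_⟩
  rw [Set.mem_singleton_iff.mp hx]
  exact relC2_isWeightedHomogeneous h01 h

theorem actC2_monomial_torusWeight {c : ℂ} (hc : c ≠ 0) (e : Fin 6 →₀ ℕ) :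
    actC2 c 1 (monomial e 1) = c ^ Finsupp.weight torusWeight e • monomial e 1 := by
  rw [actC2_monomial, weight_torusWeight, zpow_sub₀ hc, zpow_natCast, zpow_natCast, one_pow,
    mul_one, div_eq_mul_inv, inv_pow]

theorem actC2_monomial_signWeight (e : Fin 6 →₀ ℕ) :
    actC2 1 (-1) (monomial e 1) = (-1 : ℂ) ^ (Finsupp.weight signWeight e).val • monomial e 1 := by
  rw [actC2_monomial, weight_signWeight, ZMod.val_natCast, ← neg_one_pow_eq_pow_mod_two]
  simp

theorem two_zpow_ne_one {n : ℤ} (hn : n ≠ 0) : (2 : ℂ) ^ n ≠ 1 := by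
  intro h
  have h' := congrArg norm h
  rw [norm_zpow, norm_one, Complex.norm_two] at h'
  exact hn ((zpow_eq_one_iff_right₀ zero_le_two (by norm_num)).mp h')

theorem sub_weightedHomogeneousComponent_torusWeight_mem {f : P6} (hf : actC2 2 1 f - f ∈ IC2) :
    f - weightedHomogeneousComponent torusWeight 0 f ∈ IC2 := by
  have hI := IC2_isHomogeneous (w := torusWeight) rfl (by decide)
  exact sub_weightedHomogeneousComponent_zero_mem hI fun n hn =>
    weightedHomogeneousComponent_mem_of_map_sub_mem hI (actC2 2 1).toLinearMap (2 ^ ·)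
      (actC2_monomial_torusWeight two_ne_zero) hf (two_zpow_ne_one hn)

theorem sub_weightedHomogeneousComponent_signWeight_mem {f : P6} (hf : actC2 1 (-1) f - f ∈ IC2) :
    f - weightedHomogeneousComponent signWeight 0 f ∈ IC2 := by
  have hI := IC2_isHomogeneous (w := signWeight) rfl (by decide)
  refine sub_weightedHomogeneousComponent_zero_mem hI fun n hn => ?_
  refine weightedHomogeneousComponent_mem_of_map_sub_mem hI (actC2 1 (-1)).toLinearMap
    (fun ε => (-1) ^ ε.val) actC2_monomial_signWeight hf ?_
  obtain rfl : n = 1 := by fin_cases n <;> trivial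
  norm_num [ZMod.val_one]

theorem monomial_mem_range_psiC2Lift {e : Fin 6 →₀ ℕ} (hC : Finsupp.weight torusWeight e = 0)
    (hS : Finsupp.weight signWeight e = 0) : monomial e 1 ∈ psiC2Lift.range := by
  rw [weight_torusWeight, sub_eq_zero, Nat.cast_inj] at hC
  rw [weight_signWeight, ZMod.natCast_eq_zero_iff_even, Nat.even_iff] at hS
  obtain ⟨a, b, k, h2, h4⟩ : ∃ a b k, e 2 = 2 * b + a ∧ e 4 = 2 * k + a :=
    ⟨e 2 % 2, e 2 / 2, (e 4 - e 2 % 2) / 2, by omega, by omega⟩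
  refine ⟨X 0 ^ e 0 * X 1 ^ e 1 * X 2 ^ k * X 3 ^ e 5 * X 4 ^ a * X 5 ^ b, ?_⟩
  rw [monomial_eq, C_1, one_mul, Finsupp.prod_fintype _ _ (fun i => pow_zero _),
    Fin.prod_univ_six, ← hC, h2, h4]
  simp only [AlgHom.toRingHom_eq_coe, RingHom.coe_coe, psiC2Lift, map_mul, map_pow, aeval_X,
    Matrix.cons_val]
  ring

theorem component_mem_range_psiC2Lift (f : P6) :
    weightedHomogeneousComponent signWeight 0 (weightedHomogeneousComponent torusWeight 0 f) ∈
      psiC2Lift.range := by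
  have hspan : restrictSupport ℂ
      {e | Finsupp.weight torusWeight e = 0 ∧ Finsupp.weight signWeight e = 0} ≤
        Subalgebra.toSubmodule psiC2Lift.range := by
    rw [restrictSupport_eq_span, Submodule.span_le]
    rintro _ ⟨e, he, rfl⟩
    exact monomial_mem_range_psiC2Lift he.1 he.2
  refine hspan ((mem_restrictSupport_iff (R := ℂ)).mpr fun e he => ⟨?_, ?_⟩)
  · rw [Finset.mem_coe, support_weightedHomogeneousComponent, Finset.mem_filter] at he
    exact weightedHomogeneousComponent_isWeightedHomogeneous 0 f (mem_support_iff.mp he.1)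
  · exact weightedHomogeneousComponent_isWeightedHomogeneous 0 _ (mem_support_iff.mp he)

def quadricsC2 : Ideal P6 :=
  Ideal.span {X 4 * (X 0 - X 1) - X 3 * X 2, X 5 * (X 0 - X 1) - X 3 * X 4, X 4 ^ 2 - X 2 * X 5}

theorem quadricsC2_le_comap_psiC2Lift : quadricsC2 ≤ IC2.comap psiC2Lift := by
  rw [quadricsC2, Ideal.span_le]
  rintro q (rfl | rfl | rfl) <;> rw [SetLike.mem_coe, Ideal.mem_comap]
  · rw [show psiC2Lift (X 4 * (X 0 - X 1) - X 3 * X 2) = X 3 * X 4 * relC2 by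
      simp only [psiC2Lift, relC2, map_sub, map_mul, aeval_X, Matrix.cons_val]; ring]
    exact Ideal.mul_mem_left _ _ (Ideal.mem_span_singleton_self _)
  · rw [show psiC2Lift (X 5 * (X 0 - X 1) - X 3 * X 4) = X 2 * X 3 ^ 2 * relC2 by
      simp only [psiC2Lift, relC2, map_sub, map_mul, aeval_X, Matrix.cons_val]; ring]
    exact Ideal.mul_mem_left _ _ (Ideal.mem_span_singleton_self _)
  · rw [show psiC2Lift (X 4 ^ 2 - X 2 * X 5) = 0 by
      simp only [psiC2Lift, map_sub, map_mul, map_pow, aeval_X, Matrix.cons_val]; ring]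
    exact zero_mem _

def shiftX0 : P6 ≃ₐ[ℂ] P6 :=
  AlgEquiv.ofAlgHom (aeval ![X 0 + X 1, X 1, X 2, X 3, X 4, X 5])
    (aeval ![X 0 - X 1, X 1, X 2, X 3, X 4, X 5])
    (algHom_ext fun i => by fin_cases i <;> simp)
    (algHom_ext fun i => by fin_cases i <;> simp)

def paramC2 : P6 →ₐ[ℂ] P6 :=
  aeval ![X 0 * X 1 + X 4, X 4, X 2 * X 3, X 5, X 0 * X 2, X 1 * X 3]

theorem IC2_le_ker_paramC2 : IC2 ≤ RingHom.ker paramC2 := by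
  rw [IC2, Ideal.span_le, Set.singleton_subset_iff, SetLike.mem_coe, RingHom.mem_ker]
  simp only [paramC2, relC2, map_sub, map_mul, aeval_X, Matrix.cons_val]
  ring

def paramExponents : Fin 6 → Fin 6 →₀ ℕ :=
  ![Finsupp.single 0 1 + Finsupp.single 1 1, Finsupp.single 4 1,
    Finsupp.single 0 2 + Finsupp.single 2 2,
    Finsupp.single 1 1 + Finsupp.single 3 1 + Finsupp.single 5 1,
    Finsupp.single 0 1 + Finsupp.single 2 2 + Finsupp.single 3 1 + Finsupp.single 5 1,
    Finsupp.single 2 2 + Finsupp.single 3 2 + Finsupp.single 5 2]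

def paramMonomialMap : P6 →ₐ[ℂ] P6 := aeval fun i => monomial (paramExponents i) 1

theorem paramMonomialMap_shiftX0 (f : P6) :
    paramMonomialMap (shiftX0 f) = paramC2 (psiC2Lift f) := by
  have h : paramMonomialMap.comp (shiftX0 : P6 →ₐ[ℂ] P6) = paramC2.comp psiC2Lift := by
    refine algHom_ext fun i => ?_
    fin_cases i <;>
      simp only [paramMonomialMap, paramExponents, shiftX0, paramC2, psiC2Lift, AlgHom.coe_comp,
        AlgEquiv.coe_toAlgHom, Function.comp_apply, AlgEquiv.ofAlgHom_apply, aeval_X, map_add,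
        map_mul, map_pow, Fin.zero_eta, Fin.mk_one, Fin.reduceFinMk, Matrix.cons_val,
        Matrix.cons_val_zero, Matrix.cons_val_one, monomial_add_single, ← X_pow_eq_monomial,
        pow_one] <;>
      ring
  exact AlgHom.congr_fun h f

def normalExponents : Set (Fin 6 →₀ ℕ) := {e | e 4 ≤ 1 ∧ (e 0 = 0 ∨ e 4 = 0 ∧ e 5 = 0)}

theorem injOn_normalExponents :
    Set.InjOn (fun e : Fin 6 →₀ ℕ => e.sum fun i k => k • paramExponents i) normalExponents := by
  intro e ⟨he4, he⟩ e' ⟨he4', he'⟩ h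
  have hj : ∀ j, (∑ i, e i * paramExponents i j) = ∑ i, e' i * paramExponents i j := fun j => by
    simpa [Finsupp.sum_fintype] using congrArg (· j) h
  have h0 := hj 0
  have h1 := hj 1
  have h3 := hj 3
  have h4 := hj 4
  simp only [Fin.sum_univ_six, paramExponents, Matrix.cons_val, Finsupp.coe_add, Pi.add_apply,
    Finsupp.single_apply, Fin.reduceEq, reduceIte, mul_zero, mul_one, add_zero, zero_add]
    at h0 h1 h3 h4
  ext i
  fin_cases i <;> simp only [Fin.reduceFinMk, Fin.zero_eta, Fin.mk_one] <;> omega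

def reductionWeight : Fin 6 → ℕ := ![3, 0, 0, 0, 2, 3]

theorem exists_reduction_of_notMem_normalExponents {e : Fin 6 →₀ ℕ} (he : e ∉ normalExponents) :
    ∃ u v, u ≤ e ∧ monomial u (1 : ℂ) - monomial v 1 ∈ quadricsC2.comap shiftX0.symm ∧
      Finsupp.weight reductionWeight v < Finsupp.weight reductionWeight u := by
  have hgen : ∀ u v, shiftX0.symm (monomial u 1 - monomial v 1) ∈
      ({X 4 * (X 0 - X 1) - X 3 * X 2, X 5 * (X 0 - X 1) - X 3 * X 4, X 4 ^ 2 - X 2 * X 5} :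
        Set P6) → monomial u (1 : ℂ) - monomial v 1 ∈ quadricsC2.comap shiftX0.symm :=
    fun u v h => Ideal.mem_comap.mpr (Ideal.subset_span h)
  simp only [normalExponents, Set.mem_ofPred_eq, not_and_or, not_le, not_or] at he
  rcases he with h4 | ⟨h0, h4 | h5⟩
  · refine ⟨Finsupp.single 4 2, Finsupp.single 2 1 + Finsupp.single 5 1,
      Finsupp.single_le_iff.mpr h4, hgen _ _ ?_,
      by simp [Finsupp.weight_single, reductionWeight]⟩
    simp [shiftX0, monomial_add_single, ← X_pow_eq_monomial]
  · refine ⟨Finsupp.single 4 1 + Finsupp.single 0 1, Finsupp.single 3 1 + Finsupp.single 2 1,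
      Finsupp.single_add_single_le (by decide) (by omega) (by omega), hgen _ _ ?_,
      by simp [Finsupp.weight_single, reductionWeight]⟩
    simp [shiftX0, monomial_add_single, ← X_pow_eq_monomial]
  · refine ⟨Finsupp.single 5 1 + Finsupp.single 0 1, Finsupp.single 3 1 + Finsupp.single 4 1,
      Finsupp.single_add_single_le (by decide) (by omega) (by omega), hgen _ _ ?_,
      by simp [Finsupp.weight_single, reductionWeight]⟩
    simp [shiftX0, monomial_add_single, ← X_pow_eq_monomial]

theorem comap_shiftX0_symm_le_ker_paramMonomialMap :
    quadricsC2.comap shiftX0.symm ≤ RingHom.ker paramMonomialMap := by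
  intro f hf
  rw [Ideal.mem_comap] at hf
  have h := IC2_le_ker_paramC2 (Ideal.mem_comap.mp (quadricsC2_le_comap_psiC2Lift hf))
  rwa [RingHom.mem_ker, ← paramMonomialMap_shiftX0, AlgEquiv.apply_symm_apply] at h

theorem comap_psiC2Lift_le_quadricsC2 : IC2.comap psiC2Lift ≤ quadricsC2 := by
  intro f hf
  have hzero : paramMonomialMap (shiftX0 f) = 0 := by
    rw [paramMonomialMap_shiftX0]
    exact IC2_le_ker_paramC2 hf
  have htop := restrictSupport_sup_eq_top reductionWeight
    (fun e he => exists_reduction_of_notMem_normalExponents he)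
  obtain ⟨n, hn, j, hj, hnj⟩ := Submodule.mem_sup.mp (htop ▸ Submodule.mem_top (x := shiftX0 f))
  have hj' : paramMonomialMap j = 0 := comap_shiftX0_symm_le_ker_paramMonomialMap hj
  have hn0 : n = 0 := by
    refine injOn_aeval_monomial paramExponents injOn_normalExponents hn (zero_mem _) ?_
    change paramMonomialMap n = paramMonomialMap 0
    rw [map_zero, eq_sub_of_add_eq hnj, map_sub, hzero, hj', sub_zero]
  rw [hn0, zero_add] at hnj
  simpa [hnj] using Ideal.mem_comap.mp ((Submodule.restrictScalars_mem ℂ _ j).mp hj)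

theorem ker_psiC2_eq_comap : RingHom.ker psiC2 = IC2.comap psiC2Lift := by
  ext f
  rw [RingHom.mem_ker, psiC2_eq, AlgHom.comp_apply, Ideal.Quotient.mkₐ_eq_mk,
    Ideal.Quotient.eq_zero_iff_mem, Ideal.mem_comap]

/-- The map `ℂ[x₁,…,x₆] → R` above surjects onto the ring of `ℂ* × {±1}`-invariants of `R`
(its range is exactly the set of invariant elements), and its kernel is generated by the
three quadrics `x₅(x₁-x₂) - x₄x₃`, `x₆(x₁-x₂) - x₄x₅`, `x₅² - x₃x₆`; hence the invariant
ring is `ℂ[x₁,…,x₆]/(x₅(x₁-x₂) - x₄x₃, x₆(x₁-x₂) - x₄x₅, x₅² - x₃x₆)`. -/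
theorem stmt3 :
    (∀ r : P6 ⧸ IC2,
      (∀ (c : ℂˣ) (s : ℂ), s = 1 ∨ s = -1 →
        ∀ f : P6, Ideal.Quotient.mk IC2 f = r →
          Ideal.Quotient.mk IC2 (actC2 (c : ℂ) s f) = r)
      ↔ r ∈ psiC2.range) ∧
    RingHom.ker psiC2 =
      Ideal.span {X 4 * (X 0 - X 1) - X 3 * X 2, X 5 * (X 0 - X 1) - X 3 * X 4,
        X 4 ^ 2 - X 2 * X 5} := by
  refine ⟨fun r => ⟨fun hr => ?_, ?_⟩, ker_psiC2_eq_comap.trans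
    (le_antisymm comap_psiC2Lift_le_quadricsC2 quadricsC2_le_comap_psiC2Lift)⟩
  · obtain ⟨f, rfl⟩ := Ideal.Quotient.mk_surjective r
    have hinv : ∀ (c : ℂˣ) s, s = 1 ∨ s = -1 → ∀ g, Ideal.Quotient.mk IC2 g =
        Ideal.Quotient.mk IC2 f → actC2 c s g - g ∈ IC2 :=
      fun c s hs g hg => Ideal.Quotient.eq.mp ((hr c s hs g hg).trans hg.symm)
    set f₁ := weightedHomogeneousComponent torusWeight 0 f
    have hf₁ : Ideal.Quotient.mk IC2 f₁ = Ideal.Quotient.mk IC2 f :=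
      (Ideal.Quotient.eq.mpr (sub_weightedHomogeneousComponent_torusWeight_mem
        (hinv (Units.mk0 2 two_ne_zero) 1 (Or.inl rfl) f rfl))).symm
    have hf₂ := sub_weightedHomogeneousComponent_signWeight_mem (hinv 1 (-1) (Or.inr rfl) f₁ hf₁)
    obtain ⟨p, hp⟩ := (AlgHom.mem_range _).mp (component_mem_range_psiC2Lift f)
    refine (AlgHom.mem_range _).mpr ⟨p, ?_⟩
    rw [psiC2_eq, AlgHom.comp_apply, hp, Ideal.Quotient.mkₐ_eq_mk, ← hf₁]
    exact (Ideal.Quotient.eq.mpr hf₂).symm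
  · rintro ⟨p, rfl⟩ c s hs f hf
    exact mk_actC2_eq_psiC2 c.ne_zero hs hf
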